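/- In the game G, if (θ'_A, θ'_D) is a pure strategy Nash equilibrium, then θ_C(θ'_A, θ'_D) = θ*_A; that is, at any pure strategy Nash equilibrium the aggregate vector equals the majority's true preference vector, so the majority prevails on 100% of disputed cases. -/

import Mathlib

/-!
Since `α < 1 - α`, the circle of radius `1 - α` around `α θ'_D` encloses the origin, so the ray
through `θ*_A` meets it: player A can report a unit vector making the aggregate exactly `θ*_A`,
with payoff `1`. The aggregate is always a unit vector, so its payoff `⟪θ_C, θ*_A⟫` is at most `1`,
and a best response attaining `1` forces `θ_C = θ*_A` (equality in Cauchy–Schwarz).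
-/

open Real

/-- The aggregate vector `(α θ_D + (1−α) θ_A)/‖α θ_D + (1−α) θ_A‖`. -/
noncomputable def aggregate (α : ℝ) (θA θD : EuclideanSpace ℝ (Fin 2)) :
    EuclideanSpace ℝ (Fin 2) :=
  (‖α • θD + (1 - α) • θA‖)⁻¹ • (α • θD + (1 - α) • θA)

/-- `(θA', θD')` is a pure strategy Nash equilibrium of the game `G` with minority share `α`
and true preference vectors `θAstar`, `θDstar`: both strategies are unit vectors, and each is
a best response (payoffs are inner products of the aggregate with the true vectors). -/
def IsNashEq (α : ℝ) (θAstar θDstar θA' θD' : EuclideanSpace ℝ (Fin 2)) : Prop :=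
  ‖θA'‖ = 1 ∧ ‖θD'‖ = 1 ∧
  (∀ θA : EuclideanSpace ℝ (Fin 2), ‖θA‖ = 1 →
    (inner ℝ (aggregate α θA θD') θAstar : ℝ) ≤ (inner ℝ (aggregate α θA' θD') θAstar : ℝ)) ∧
  (∀ θD : EuclideanSpace ℝ (Fin 2), ‖θD‖ = 1 →
    (inner ℝ (aggregate α θA' θD) θDstar : ℝ) ≤ (inner ℝ (aggregate α θA' θD') θDstar : ℝ))

section NormedSpace

variable {E : Type*} [NormedAddCommGroup E] [NormedSpace ℝ E]

lemma one_sub_two_mul_le_norm_smul_add_smul {α : ℝ} (hα₀ : 0 ≤ α) (hα₁ : α ≤ 1) {u v : E}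
    (hu : ‖u‖ = 1) (hv : ‖v‖ = 1) : 1 - 2 * α ≤ ‖α • v + (1 - α) • u‖ := by
  have h := norm_sub_norm_le ((1 - α) • u) (-(α • v))
  rw [sub_neg_eq_add, add_comm, norm_neg, norm_smul, norm_smul, hu, hv,
    Real.norm_of_nonneg (sub_nonneg.mpr hα₁), Real.norm_of_nonneg hα₀] at h
  linarith

lemma exists_pos_norm_smul_sub_eq {a w : E} {r : ℝ} (ha : ‖a‖ = 1) (hw : ‖w‖ < r) :
    ∃ t : ℝ, 0 < t ∧ ‖t • a - w‖ = r := by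
  have hcont : Continuous fun t : ℝ => ‖t • a - w‖ := by fun_prop
  have hf0 : ‖(0 : ℝ) • a - w‖ = ‖w‖ := by rw [zero_smul, zero_sub, norm_neg]
  have hfT : r ≤ ‖(r + ‖w‖) • a - w‖ := by
    have h := norm_sub_norm_le ((r + ‖w‖) • a) w
    rw [norm_smul, ha, mul_one, Real.norm_of_nonneg (by linarith [norm_nonneg w])] at h
    linarith
  obtain ⟨t, ht, hft⟩ := intermediate_value_Icc (by linarith [norm_nonneg w]) hcont.continuousOn
    ⟨hf0.le.trans hw.le, hfT⟩
  refine ⟨t, ht.1.lt_of_ne ?_, hft⟩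
  rintro rfl
  exact hw.ne (hf0 ▸ hft)

end NormedSpace

section Aggregate

variable {α : ℝ} {θA θD a : EuclideanSpace ℝ (Fin 2)}

lemma norm_aggregate (hα₀ : 0 ≤ α) (hα : α < 1 / 2) (hA : ‖θA‖ = 1) (hD : ‖θD‖ = 1) :
    ‖aggregate α θA θD‖ = 1 := by
  have hpos : 0 < ‖α • θD + (1 - α) • θA‖ :=
    lt_of_lt_of_le (by linarith) (one_sub_two_mul_le_norm_smul_add_smul hα₀ (by linarith) hA hD)
  exact norm_smul_inv_norm (norm_pos_iff.mp hpos)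

lemma exists_norm_eq_one_aggregate_eq (hα₀ : 0 ≤ α) (hα : α < 1 / 2) (hD : ‖θD‖ = 1)
    (ha : ‖a‖ = 1) : ∃ θA, ‖θA‖ = 1 ∧ aggregate α θA θD = a := by
  have hα₁ : 0 < 1 - α := by linarith
  have hw : ‖α • θD‖ < 1 - α := by
    rw [norm_smul, hD, mul_one, Real.norm_of_nonneg hα₀]
    linarith
  obtain ⟨t, ht, hnorm⟩ := exists_pos_norm_smul_sub_eq ha hw
  refine ⟨(1 - α)⁻¹ • (t • a - α • θD), ?_, ?_⟩
  · rw [norm_smul, hnorm, norm_inv, Real.norm_of_nonneg hα₁.le, inv_mul_cancel₀ hα₁.ne']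
  · have hsum : α • θD + (1 - α) • (1 - α)⁻¹ • (t • a - α • θD) = t • a := by
      rw [smul_inv_smul₀ hα₁.ne', add_sub_cancel]
    rw [aggregate, hsum, norm_smul, ha, Real.norm_of_nonneg ht.le, mul_one,
      inv_smul_smul₀ ht.ne']

end Aggregate

theorem stmt_8_general (α : ℝ) (hα : 0 < α) (hα' : α < 1 / 2)
    (θAstar θDstar : EuclideanSpace ℝ (Fin 2))
    (hAs : ‖θAstar‖ = 1)
    (θA' θD' : EuclideanSpace ℝ (Fin 2))
    (hNash : IsNashEq α θAstar θDstar θA' θD') :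
    aggregate α θA' θD' = θAstar := by
  obtain ⟨hA', hD', hbestA, -⟩ := hNash
  obtain ⟨θA, hθA, hforce⟩ := exists_norm_eq_one_aggregate_eq hα.le hα' hD' hAs
  have hunit := norm_aggregate hα.le hα' hA' hD'
  have hge : 1 ≤ inner ℝ (aggregate α θA' θD') θAstar := by
    simpa [hforce, real_inner_self_eq_norm_sq, hAs] using hbestA θA hθA
  have hle : inner ℝ (aggregate α θA' θD') θAstar ≤ 1 := by
    simpa [hunit, hAs] using real_inner_le_norm (aggregate α θA' θD') θAstar
  exact (inner_eq_one_iff_of_norm_eq_one hunit hAs).mp (le_antisymm hle hge)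

/-- Lemma 3: at any pure strategy Nash equilibrium the aggregate equals the majority's true
preference vector. -/
theorem stmt_8 (α : ℝ) (hα : 0 < α) (hα' : α < 1 / 2)
    (θAstar θDstar : EuclideanSpace ℝ (Fin 2))
    (hAs : ‖θAstar‖ = 1) (hDs : ‖θDstar‖ = 1) (hne : θAstar ≠ θDstar)
    (θA' θD' : EuclideanSpace ℝ (Fin 2))
    (hNash : IsNashEq α θAstar θDstar θA' θD') :
    aggregate α θA' θD' = θAstar :=
  stmt_8_general α hα hα' θAstar θDstar hAs θA' θD' hNash
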